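/- arXiv:quant-ph/0601138 — 2 statements merged into one kernel-verified Lean document; each statement's English description precedes it below -/
import Mathlib

section
/- Let s = Σᵢ tᵢ xᵢ and m = Σᵢ rᵢ xᵢ be points of the open standard simplex (all tᵢ, rᵢ > 0), and define eig(x_k, s) = {m : t_k/r_k > t_j/r_j for all j ≠ k}. If m lies in the open convex hull C_k^s = ]x₁,...,x_{k−1}, s, x_{k+1},...,xₙ[ (all barycentric coefficients strictly positive), then m ∈ eig(x_k, s). Conversely, eig(x_k, s) is contained in the closed convex hull [C_k^s]. In symbols: C_k^s ⊆ eig(x_k, s) ⊆ [C_k^s]. -/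
open Finset

/-- for `s` in the open standard simplex, the Bayes-optimal eigenset
`eig(x_k, s) = {m : t_k/r_k > t_j/r_j ∀ j ≠ k}` is squeezed between the open
sub-simplex `C_k^s` (vertex `x_k` replaced by `s`, strictly positive coefficients)
and its convex hull: `C_k^s ⊆ eig(x_k, s) ⊆ [C_k^s]`. -/
theorem eigenset_squeeze (n : ℕ) (hn : 1 ≤ n) (k : Fin n) (t : Fin n → ℝ)
    (ht0 : ∀ i, 0 < t i) (ht1 : ∑ i, t i = 1) :
    {m : Fin n → ℝ | ∃ l : Fin n → ℝ, (∀ i, 0 < l i) ∧ ∑ i, l i = 1 ∧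
        m = ∑ i, l i • (if i = k then t else Pi.single i (1 : ℝ))} ⊆
      {m : Fin n → ℝ | (∀ i, 0 < m i) ∧ ∑ i, m i = 1 ∧ ∀ j, j ≠ k → t j / m j < t k / m k} ∧
    {m : Fin n → ℝ | (∀ i, 0 < m i) ∧ ∑ i, m i = 1 ∧ ∀ j, j ≠ k → t j / m j < t k / m k} ⊆
      convexHull ℝ (Set.range fun i : Fin n => if i = k then t else Pi.single i (1 : ℝ)) := by
  have hcoord : ∀ (l : Fin n → ℝ) (j : Fin n),
      (∑ i, l i • (if i = k then t else Pi.single i (1 : ℝ))) j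
        = l k * t j + (if j = k then 0 else l j) := by
    intro l j
    simp only [Finset.sum_apply, Pi.smul_apply, smul_eq_mul]
    rw [Finset.sum_eq_add_sum_sdiff_singleton_of_mem (Finset.mem_univ k)]
    have h1 : ∑ i ∈ Finset.univ \ {k},
        l i * (if i = k then t else Pi.single i (1 : ℝ)) j
        = ∑ i ∈ Finset.univ \ {k}, (if j = i then l i else 0) := by
      apply Finset.sum_congr rfl
      intro i hi
      simp only [Finset.mem_sdiff, Finset.mem_singleton] at hi
      rw [if_neg hi.2, Pi.single_apply]
      by_cases h : j = i <;> simp [h]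
    rw [h1, Finset.sum_ite_eq (Finset.univ \ {k}) j l]
    simp only [Finset.mem_sdiff, Finset.mem_univ, Finset.mem_singleton, true_and, if_pos rfl]
    by_cases h : j = k <;> simp [h]
  have hsumite : ∀ (l : Fin n → ℝ), ∑ j, (if j = k then (0:ℝ) else l j) = (∑ j, l j) - l k := by
    intro l
    have : ∀ j, (if j = k then (0:ℝ) else l j) = l j - (if j = k then l j else 0) := by
      intro j; by_cases h : j = k <;> simp [h]
    simp_rw [this, Finset.sum_sub_distrib, Finset.sum_ite_eq' Finset.univ k l]
    simp
  constructor
  · rintro m ⟨l, hl0, hl1, rfl⟩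
    have hc := hcoord l
    refine ⟨?_, ?_, ?_⟩
    · intro j
      rw [hc j]
      by_cases h : j = k
      · rw [h, if_pos rfl, add_zero]
        exact mul_pos (hl0 k) (ht0 k)
      · rw [if_neg h]
        exact add_pos (mul_pos (hl0 k) (ht0 j)) (hl0 j)
    · simp_rw [hc]
      rw [Finset.sum_add_distrib, ← Finset.mul_sum, ht1, hsumite l, hl1]
      ring
    · intro j hj
      rw [hc j, hc k, if_pos rfl, if_neg hj, add_zero]
      have hmj : 0 < l k * t j + l j := add_pos (mul_pos (hl0 k) (ht0 j)) (hl0 j)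
      have hmk : 0 < l k * t k := mul_pos (hl0 k) (ht0 k)
      rw [div_lt_div_iff₀ hmj hmk]
      nlinarith [mul_pos (ht0 k) (hl0 j)]
  · rintro m ⟨hm0, hm1, hmlt⟩
    set c : Fin n → ℝ := fun j => if j = k then m k / t k else m j - (m k / t k) * t j with hcdef
    have htk := ht0 k
    have hc0 : ∀ j, 0 ≤ c j := by
      intro j
      by_cases h : j = k
      · simp only [hcdef, if_pos h]
        exact le_of_lt (div_pos (hm0 k) htk)
      · simp only [hcdef, if_neg h]
        have := hmlt j h
        rw [div_lt_div_iff₀ (hm0 j) (hm0 k)] at this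
        rw [sub_nonneg, div_mul_eq_mul_div, div_le_iff₀ htk]
        nlinarith
    have hck : c k * t k = m k := by
      simp only [hcdef, if_pos rfl]
      field_simp
    have hcsum : ∑ j, c j = 1 := by
      have h1 : ∀ j, c j = (m j - (m k / t k) * t j) +
          (if j = k then (m k / t k) - (m k - (m k / t k) * t k) else 0) := by
        intro j
        by_cases h : j = k
        · rw [h]; simp only [hcdef]
          split_ifs with h'
          · ring
          · exact absurd trivial h'
        · simp [hcdef, h]
      simp_rw [h1]
      rw [Finset.sum_add_distrib, Finset.sum_ite_eq' Finset.univ k, Finset.sum_sub_distrib,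
        ← Finset.mul_sum, ht1, hm1]
      have : (m k / t k) * t k = m k := by field_simp
      simp [this]
    have hrepr : m = ∑ j, c j • (if j = k then t else Pi.single j (1 : ℝ)) := by
      funext j
      rw [hcoord c j]
      by_cases h : j = k
      · rw [h, if_pos rfl, add_zero, hck]
      · rw [if_neg h]
        simp only [hcdef, if_pos rfl, if_neg h]
        ring
    rw [hrepr]
    exact (convex_convexHull ℝ _).sum_mem (fun i _ => hc0 i) hcsum
      (fun i _ => subset_convexHull ℝ _ ⟨i, rfl⟩)
end

section
/- Squeeze theorem for eigenset measure: if C ⊆ E ⊆ [C] where C is an open simplex, [C] its closure (convex hull), and the boundary [C] \ C has (n−1)-dimensional Hausdorff measure zero, then μ(E) = μ([C]). Consequently, for the Bayes-optimal eigenset eig(x_k, s) in the standard simplex, μ(eig(x_k, s)) = t_k when μ is normalized so that μ(Δₙ₋₁) = 1. -/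
set_option maxHeartbeats 1000000

open Finset MeasureTheory Module

private lemma aux_det {n m : ℕ} (σ σk : EuclideanSpace ℝ (Fin n) →ₗ[ℝ] ℝ)
    (hfr : finrank ℝ (LinearMap.ker σ) = m)
    (w : LinearMap.ker σ)
    (T : EuclideanSpace ℝ (Fin n) →ₗ[ℝ] EuclideanSpace ℝ (Fin n))
    (hT : ∀ x, T x = x + σk x • (w : EuclideanSpace ℝ (Fin n)))
    (hTm : ∀ x ∈ LinearMap.ker σ, T x ∈ LinearMap.ker σ) :
    LinearMap.det (T.restrict hTm) = 1 + σk w := by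
  classical
  have bas : Basis (Fin m) ℝ (LinearMap.ker σ) :=
    ((stdOrthonormalBasis ℝ (LinearMap.ker σ)).reindex (finCongr hfr)).toBasis
  rw [← LinearMap.det_toMatrix bas]
  have hM : LinearMap.toMatrix bas bas (T.restrict hTm) =
      1 + Matrix.replicateCol Unit (fun i => bas.repr w i) * Matrix.replicateRow Unit (fun j => σk (bas j)) := by
    ext i j
    rw [LinearMap.toMatrix_apply]
    have : (T.restrict hTm) (bas j) = bas j + σk (bas j) • w := by
      ext
      simp [LinearMap.restrict_apply, hT]
    rw [this]
    simp [Matrix.one_apply, Matrix.mul_apply, mul_comm, Matrix.replicateCol, Matrix.replicateRow,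
      Basis.repr_self, Finsupp.single_apply, eq_comm]
  rw [hM, Matrix.det_one_add_replicateCol_mul_replicateRow]
  congr 1
  have hw : ∑ j, bas.repr w j • bas j = w := bas.sum_repr w
  calc dotProduct (fun j => σk (bas j)) (fun i => bas.repr w i)
      = σk (∑ j, bas.repr w j • (bas j : EuclideanSpace ℝ (Fin n))) := by
        simp [dotProduct, map_sum, mul_comm]
    _ = σk w := by
        congr 1
        calc ∑ j, bas.repr w j • (bas j : EuclideanSpace ℝ (Fin n))
            = ((∑ j, bas.repr w j • bas j : LinearMap.ker σ) : EuclideanSpace ℝ (Fin n)) := by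
              push_cast; rfl
          _ = w := by rw [hw]

private lemma aux_haar {m : ℕ} {d : ℝ} (hd : d = (m : ℝ)) :
    (μH[d] : Measure (EuclideanSpace ℝ (Fin m))).IsAddHaarMeasure := by
  subst hd
  have h : ((finrank ℝ (EuclideanSpace ℝ (Fin m)) : ℕ) : ℝ) = (m : ℝ) := by
    simp [finrank_euclideanSpace_fin]
  exact h ▸ isAddHaarMeasure_hausdorffMeasure

private lemma aux_img {m : ℕ} {d : ℝ} (hd : d = (m : ℝ)) (b : EuclideanSpace ℝ (Fin m))
    (L : EuclideanSpace ℝ (Fin m) →ₗ[ℝ] EuclideanSpace ℝ (Fin m))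
    (A : Set (EuclideanSpace ℝ (Fin m))) :
    μH[d] ((fun y => b + L y) '' A) = ENNReal.ofReal |LinearMap.det L| * μH[d] A := by
  haveI := aux_haar hd
  have h1 : (fun y => b + L y) '' A = (fun y => b + y) '' (L '' A) := by
    rw [Set.image_image]
  have h2 : μH[d] ((fun y => b + y) '' (L '' A)) = μH[d] (L '' A) :=
    (isometry_add_left b).hausdorffMeasure_image (Or.inr (add_left_surjective b)) _
  rw [h1, h2, Measure.addHaar_image_linearMap]

private lemma aux_affine {m : ℕ} {d : ℝ} (hd : d = (m : ℝ))
    (s : AffineSubspace ℝ (EuclideanSpace ℝ (Fin m))) (hs : s ≠ ⊤) :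
    μH[d] (s : Set (EuclideanSpace ℝ (Fin m))) = 0 := by
  haveI := aux_haar hd
  exact Measure.addHaar_affineSubspace _ s hs

/-- squeeze theorem for the eigenset measure.  If `C ⊆ E ⊆ [C]`
and the boundary `[C] \ C` has `(n−1)`-Hausdorff measure zero, then
`μ(E) = μ([C])`.  Consequently the Bayes-optimal eigenset in the standard
simplex satisfies `μ(eig(x_k, s)) = t_k · μ(Δₙ₋₁)` (i.e. `= t_k` after
normalizing `μ(Δₙ₋₁) = 1`). -/
theorem eigenset_measure_squeeze (n : ℕ) (hn : 1 ≤ n) :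
    (∀ C E : Set (EuclideanSpace ℝ (Fin n)), C ⊆ E → E ⊆ convexHull ℝ C →
        μH[(n : ℝ) - 1] (convexHull ℝ C \ C) = 0 →
        μH[(n : ℝ) - 1] E = μH[(n : ℝ) - 1] (convexHull ℝ C)) ∧
      ∀ (k : Fin n) (t : Fin n → ℝ), (∀ i, 0 < t i) → ∑ i, t i = 1 →
        μH[(n : ℝ) - 1]
            {m : EuclideanSpace ℝ (Fin n) | (∀ i, 0 < m i) ∧ ∑ i, m i = 1 ∧
              ∀ j, j ≠ k → t j / m j < t k / m k} =
          ENNReal.ofReal (t k) *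
            μH[(n : ℝ) - 1] {x : EuclideanSpace ℝ (Fin n) | (∀ i, 0 ≤ x i) ∧ ∑ i, x i = 1} := by
  classical
  constructor
  · intro C E hCE hE hnull
    refine le_antisymm (measure_mono hE) ?_
    calc μH[(n : ℝ) - 1] (convexHull ℝ C)
        ≤ μH[(n : ℝ) - 1] (E ∪ (convexHull ℝ C \ C)) := by
          refine measure_mono fun x hx => ?_
          by_cases hC : x ∈ C
          · exact Or.inl (hCE hC)
          · exact Or.inr ⟨hx, hC⟩
      _ ≤ μH[(n : ℝ) - 1] E + μH[(n : ℝ) - 1] (convexHull ℝ C \ C) := measure_union_le _ _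
      _ = μH[(n : ℝ) - 1] E := by rw [hnull, add_zero]
  · intro k t ht hsum
    set m := n - 1 with hm
    have hd : (n : ℝ) - 1 = (m : ℝ) := by
      rw [hm, Nat.cast_sub hn, Nat.cast_one]
    have hd0 : (0 : ℝ) ≤ (n : ℝ) - 1 := by
      have : (1 : ℝ) ≤ (n : ℝ) := by exact_mod_cast hn
      linarith
    -- coordinate functionals and sum functional
    set coordLM : Fin n → (EuclideanSpace ℝ (Fin n) →ₗ[ℝ] ℝ) := fun i =>
      { toFun := fun x => x i
        map_add' := fun x y => rfl
        map_smul' := fun c x => rfl } with hcoordLM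
    set σ : EuclideanSpace ℝ (Fin n) →ₗ[ℝ] ℝ :=
      { toFun := fun x => ∑ i, x i
        map_add' := fun x y => by
          simp only [PiLp.add_apply]
          exact Finset.sum_add_distrib
        map_smul' := fun r x => by
          simp only [PiLp.smul_apply, smul_eq_mul, RingHom.id_apply]
          rw [Finset.mul_sum] } with hσdef
    have hσ_apply : ∀ x : EuclideanSpace ℝ (Fin n), σ x = ∑ i, x i := fun x => rfl
    have hσ_single : ∀ j : Fin n, σ (EuclideanSpace.single j (1:ℝ)) = 1 := by
      intro j
      simp [hσ_apply, EuclideanSpace.single_apply]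
    set K := LinearMap.ker σ with hK
    have hfr : finrank ℝ K = m := by
      have hr : LinearMap.range σ = ⊤ := by
        rw [LinearMap.range_eq_top]
        intro c
        exact ⟨c • EuclideanSpace.single k (1:ℝ), by simp [hσ_single]⟩
      have h2 := σ.finrank_range_add_finrank_ker
      rw [hr] at h2
      have hV : finrank ℝ (EuclideanSpace ℝ (Fin n)) = n := finrank_euclideanSpace_fin
      rw [finrank_top, hV] at h2
      simp only [finrank_self] at h2
      rw [hK]
      omega
    set ℓ : EuclideanSpace ℝ (Fin m) ≃ₗᵢ[ℝ] K :=
      ((stdOrthonormalBasis ℝ K).reindex (finCongr hfr)).repr.symm with hℓ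
    set c : EuclideanSpace ℝ (Fin n) := EuclideanSpace.single k (1:ℝ) with hc
    have hσc : σ c = 1 := hσ_single k
    set φ : EuclideanSpace ℝ (Fin m) → EuclideanSpace ℝ (Fin n) := fun y => c + (ℓ y : EuclideanSpace ℝ (Fin n)) with hφ
    have hφ_isom : Isometry φ := by
      have h1 : Isometry (fun v : K => c + (v : EuclideanSpace ℝ (Fin n))) :=
        (isometry_add_left c).comp K.subtypeₗᵢ.isometry
      exact h1.comp ℓ.isometry
    have hrange : Set.range φ = {x : EuclideanSpace ℝ (Fin n) | σ x = 1} := by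
      ext x
      constructor
      · rintro ⟨y, rfl⟩
        have : σ (ℓ y : EuclideanSpace ℝ (Fin n)) = 0 := (ℓ y).2
        simp [hφ, map_add, hσc, this]
      · intro hx
        have hx1 : σ x = 1 := hx
        have hmem : x - c ∈ K := by
          rw [hK, LinearMap.mem_ker, map_sub, hx1, hσc, sub_self]
        refine ⟨ℓ.symm ⟨x - c, hmem⟩, ?_⟩
        show c + ((ℓ (ℓ.symm ⟨x - c, hmem⟩)) : EuclideanSpace ℝ (Fin n)) = x
        rw [ℓ.apply_symm_apply]
        show c + (x - c) = x
        abel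
    have transfer : ∀ S : Set (EuclideanSpace ℝ (Fin n)), S ⊆ {x : EuclideanSpace ℝ (Fin n) | σ x = 1} →
        μH[(n : ℝ) - 1] (φ ⁻¹' S) = μH[(n : ℝ) - 1] S := by
      intro S hS
      rw [hφ_isom.hausdorffMeasure_preimage (Or.inl hd0) S, hrange,
        Set.inter_eq_self_of_subset_left hS]
    -- the vector w and the map T
    set wv : EuclideanSpace ℝ (Fin n) := (WithLp.equiv 2 (Fin n → ℝ)).symm t - c with hwv
    have hwv_apply : ∀ i, wv i = t i - if i = k then 1 else 0 := by
      intro i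
      simp [hwv, hc, PiLp.sub_apply, WithLp.equiv_symm_apply, PiLp.toLp_apply, EuclideanSpace.single_apply]
    have hwvk : wv k = t k - 1 := by rw [hwv_apply]; simp
    have hwvne : ∀ i, i ≠ k → wv i = t i := by
      intro i h
      rw [hwv_apply, if_neg h]
      ring
    have hσwv : σ wv = 0 := by
      rw [hσ_apply]
      simp only [hwv_apply]
      rw [Finset.sum_sub_distrib, hsum]
      simp
    set w : K := ⟨wv, hσwv⟩ with hw
    set T : EuclideanSpace ℝ (Fin n) →ₗ[ℝ] EuclideanSpace ℝ (Fin n) := LinearMap.id + (coordLM k).smulRight wv with hT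
    have hTapp : ∀ x : EuclideanSpace ℝ (Fin n), T x = x + x k • wv := fun x => rfl
    have hTcoord : ∀ (x : EuclideanSpace ℝ (Fin n)) (i : Fin n), T x i = x i + x k * wv i := fun x i => rfl
    have hσT : ∀ x : EuclideanSpace ℝ (Fin n), σ (T x) = σ x := by
      intro x
      rw [hTapp, map_add, _root_.map_smul, hσwv, smul_zero, add_zero]
    have hTm : ∀ x ∈ K, T x ∈ K := by
      intro x hx
      rw [LinearMap.mem_ker] at hx ⊢
      rw [hσT, hx]
    have hdet : LinearMap.det (T.restrict hTm) = t k := by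
      have := aux_det σ (coordLM k) hfr w T (by intro x; exact hTapp x) hTm
      rw [this]
      have : coordLM k (w : EuclideanSpace ℝ (Fin n)) = t k - 1 := by
        show wv k = t k - 1
        simp [hwv_apply]
      rw [this]; ring
    set L : EuclideanSpace ℝ (Fin m) →ₗ[ℝ] EuclideanSpace ℝ (Fin m) :=
      (ℓ.toLinearEquiv.symm : K →ₗ[ℝ] EuclideanSpace ℝ (Fin m)) ∘ₗ
        (T.restrict hTm) ∘ₗ (ℓ.toLinearEquiv : EuclideanSpace ℝ (Fin m) →ₗ[ℝ] K) with hL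
    have hLdet : LinearMap.det L = t k := by
      have h1 := LinearMap.det_conj (T.restrict hTm) ℓ.toLinearEquiv.symm
      rw [LinearEquiv.symm_symm] at h1
      rw [hL, h1, hdet]
    have hLapp : ∀ y, (ℓ (L y) : EuclideanSpace ℝ (Fin n)) = T (ℓ y : EuclideanSpace ℝ (Fin n)) := by
      intro y
      show ((ℓ (ℓ.toLinearEquiv.symm ((T.restrict hTm) (ℓ.toLinearEquiv y)))) : EuclideanSpace ℝ (Fin n)) = _
      have : ℓ (ℓ.toLinearEquiv.symm ((T.restrict hTm) (ℓ.toLinearEquiv y)))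
          = (T.restrict hTm) (ℓ.toLinearEquiv y) := by
        exact ℓ.apply_symm_apply _
      rw [this]
      rfl
    have hTcK : T c - c ∈ K := by
      rw [LinearMap.mem_ker, map_sub, hσT, hσc, sub_self]
    set b' : EuclideanSpace ℝ (Fin m) := ℓ.symm ⟨T c - c, hTcK⟩ with hb'
    set g : EuclideanSpace ℝ (Fin m) → EuclideanSpace ℝ (Fin m) := fun y => b' + L y with hg
    have hcomm : ∀ y, φ (g y) = T (φ y) := by
      intro y
      have h1 : (ℓ (g y) : EuclideanSpace ℝ (Fin n)) = (T c - c) + T (ℓ y : EuclideanSpace ℝ (Fin n)) := by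
        rw [hg]
        simp only [map_add]
        rw [Submodule.coe_add]
        congr 1
        · rw [hb']
          simp [ℓ.apply_symm_apply]
        · exact hLapp y
      show c + (ℓ (g y) : EuclideanSpace ℝ (Fin n)) = T (φ y)
      rw [h1, hφ, map_add]
      abel
    have himg : ∀ S : Set (EuclideanSpace ℝ (Fin n)), S ⊆ {x : EuclideanSpace ℝ (Fin n) | σ x = 1} →
        φ ⁻¹' (T '' S) = g '' (φ ⁻¹' S) := by
      intro S hS
      ext x
      constructor
      · intro hx
        obtain ⟨s, hs, hTs⟩ := hx
        have hsr : s ∈ Set.range φ := by rw [hrange]; exact hS hs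
        obtain ⟨u, rfl⟩ := hsr
        refine ⟨u, hs, ?_⟩
        apply hφ_isom.injective
        rw [hcomm]
        exact hTs
      · rintro ⟨u, hu, rfl⟩
        exact ⟨φ u, hu, (hcomm u).symm⟩
    have scale : ∀ S : Set (EuclideanSpace ℝ (Fin n)), S ⊆ {x : EuclideanSpace ℝ (Fin n) | σ x = 1} →
        μH[(n : ℝ) - 1] (T '' S) = ENNReal.ofReal (t k) * μH[(n : ℝ) - 1] S := by
      intro S hS
      have hTS : T '' S ⊆ {x : EuclideanSpace ℝ (Fin n) | σ x = 1} := by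
        rintro _ ⟨s, hs, rfl⟩
        show σ (T s) = 1
        rw [hσT]; exact hS hs
      rw [← transfer (T '' S) hTS, ← transfer S hS, himg S hS]
      have := aux_img hd b' L (φ ⁻¹' S)
      rw [hg]
      rw [this, hLdet, abs_of_pos (ht k)]
    -- the simplex sets
    set Δo : Set (EuclideanSpace ℝ (Fin n)) := {y : EuclideanSpace ℝ (Fin n) | (∀ i, 0 < y i) ∧ ∑ i, y i = 1} with hΔo
    set Δ : Set (EuclideanSpace ℝ (Fin n)) := {x : EuclideanSpace ℝ (Fin n) | (∀ i, 0 ≤ x i) ∧ ∑ i, x i = 1} with hΔ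
    have hΔo_sub : Δo ⊆ {x : EuclideanSpace ℝ (Fin n) | σ x = 1} := fun x hx => hx.2
    have hΔ_sub : Δ ⊆ {x : EuclideanSpace ℝ (Fin n) | σ x = 1} := fun x hx => hx.2
    -- the eigenset equals T '' Δo
    have hEeq : {m' : EuclideanSpace ℝ (Fin n) | (∀ i, 0 < m' i) ∧ ∑ i, m' i = 1 ∧
        ∀ j, j ≠ k → t j / m' j < t k / m' k} = T '' Δo := by
      ext x
      constructor
      · rintro ⟨hpos, hsum', hlt⟩
        set r : ℝ := x k / t k with hr
        have hrtk : r * t k = x k := div_mul_cancel₀ _ (ht k).ne'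
        have hrpos : 0 < r := div_pos (hpos k) (ht k)
        have happ : ∀ i, (x - r • wv : EuclideanSpace ℝ (Fin n)) i = x i - r * wv i :=
          fun i => rfl
        have hyk : (x - r • wv : EuclideanSpace ℝ (Fin n)) k = r := by
          rw [happ, hwvk]
          linear_combination -hrtk
        refine ⟨x - r • wv, ⟨?_, ?_⟩, ?_⟩
        · intro i
          by_cases hik : i = k
          · rw [hik, hyk]; exact hrpos
          · rw [happ, hwvne i hik]
            have hlt' := hlt i hik
            rw [div_lt_div_iff₀ (hpos i) (hpos k)] at hlt'
            have h3 : r * t i < x i := by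
              rw [hr, div_mul_eq_mul_div, div_lt_iff₀ (ht k)]
              nlinarith
            linarith
        · have hσy : σ (x - r • wv) = 1 := by
            rw [map_sub, _root_.map_smul, hσwv, smul_zero, sub_zero]
            exact (hσ_apply x).trans hsum'
          exact hσy
        · rw [hTapp, hyk]
          abel
      · rintro ⟨y, ⟨hy_pos, hy_sum⟩, rfl⟩
        have hk : T y k = y k * t k := by
          rw [hTcoord, hwvk]
          ring
        have hne : ∀ i, i ≠ k → T y i = y i + y k * t i := by
          intro i hik
          rw [hTcoord, hwvne i hik]
        have hTpos : ∀ i, 0 < T y i := by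
          intro i
          by_cases hik : i = k
          · rw [hik, hk]; exact mul_pos (hy_pos k) (ht k)
          · rw [hne i hik]
            have := mul_pos (hy_pos k) (ht i)
            linarith [hy_pos i]
        refine ⟨hTpos, ?_, ?_⟩
        · have : σ (T y) = 1 := by rw [hσT, hσ_apply, hy_sum]
          exact this
        · intro j hjk
          rw [div_lt_div_iff₀ (hTpos j) (hTpos k), hk, hne j hjk]
          have := mul_pos (ht k) (hy_pos j)
          nlinarith
    -- boundary of the simplex is null
    have hbd : μH[(n : ℝ) - 1] (Δ \ Δo) = 0 := by
      rcases eq_or_lt_of_le hn with h1 | h2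
      · -- n = 1 : the boundary is empty
        have : Δ \ Δo = ∅ := by
          ext x
          simp only [Set.mem_diff, Set.mem_empty_iff_false, iff_false, not_and, not_not]
          rintro ⟨hge, hs⟩
          refine (⟨fun i => ?_, hs⟩ : (∀ i, 0 < x i) ∧ ∑ i, x i = 1)
          have hik : i = k := by
            have h1' := i.isLt
            have h2' := k.isLt
            apply Fin.ext
            omega
          have hsum1 : ∑ j, x j = x i := by
            rw [Finset.sum_eq_single i]
            · intro b _ hb
              exfalso
              refine hb (Fin.ext ?_)
              have h1' := b.isLt
              have h2' := i.isLt
              omega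
            · intro h; exact absurd (Finset.mem_univ i) h
          rw [hsum1] at hs
          rw [hs]; norm_num
        rw [this, measure_empty]
      · -- 2 ≤ n : the boundary is contained in finitely many hyperplane slices
        have hsub : Δ \ Δo ⊆ ⋃ i, {x : EuclideanSpace ℝ (Fin n) | σ x = 1 ∧ x i = 0} := by
          rintro x ⟨⟨hge, hs⟩, hno⟩
          have : ¬ ∀ i, 0 < x i := by
            intro hall
            exact hno ⟨hall, hs⟩
          push_neg at this
          obtain ⟨i, hi⟩ := this
          exact Set.mem_iUnion.2 ⟨i, ⟨hs, le_antisymm hi (hge i)⟩⟩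
        refine le_antisymm ?_ zero_le
        calc μH[(n : ℝ) - 1] (Δ \ Δo) ≤ μH[(n : ℝ) - 1] (⋃ i, {x : EuclideanSpace ℝ (Fin n) | σ x = 1 ∧ x i = 0}) :=
              measure_mono hsub
          _ ≤ ∑' i, μH[(n : ℝ) - 1] {x : EuclideanSpace ℝ (Fin n) | σ x = 1 ∧ x i = 0} := measure_iUnion_le _
          _ = 0 := by
              rw [ENNReal.tsum_eq_zero]
              intro i
              set G : Set (EuclideanSpace ℝ (Fin n)) := {x : EuclideanSpace ℝ (Fin n) | σ x = 1 ∧ x i = 0} with hG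
              have hG_sub : G ⊆ {x : EuclideanSpace ℝ (Fin n) | σ x = 1} := fun x hx => hx.1
              rw [← transfer G hG_sub]
              -- the preimage is contained in a proper affine subspace
              set li : EuclideanSpace ℝ (Fin m) →ₗ[ℝ] ℝ :=
                (coordLM i) ∘ₗ K.subtype ∘ₗ
                  (ℓ.toLinearEquiv : EuclideanSpace ℝ (Fin m) →ₗ[ℝ] K) with hli
              have hli_apply : ∀ y, li y = (ℓ y : EuclideanSpace ℝ (Fin n)) i := fun y => rfl
              have hli_ne : li ≠ 0 := by
                haveI : Nontrivial (Fin n) := by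
                  rw [Fin.nontrivial_iff_two_le]
                  omega
                obtain ⟨j, hj⟩ := exists_ne i
                have hmem : EuclideanSpace.single i (1:ℝ) - EuclideanSpace.single j 1 ∈ K := by
                  rw [LinearMap.mem_ker, map_sub, hσ_single, hσ_single, sub_self]
                have hv : li (ℓ.symm ⟨_, hmem⟩) = 1 := by
                  rw [hli_apply, ℓ.apply_symm_apply]
                  show ((EuclideanSpace.single i (1:ℝ) - EuclideanSpace.single j 1 :
                    EuclideanSpace ℝ (Fin n))) i = 1
                  rw [PiLp.sub_apply]
                  have hij : ¬ (i = j) := fun h => hj h.symm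
                  simp [EuclideanSpace.single_apply, hij]
                intro h0
                rw [h0] at hv
                simp at hv
              rcases Set.eq_empty_or_nonempty (φ ⁻¹' G) with hemp | ⟨y₀, hy₀⟩
              · rw [hemp, measure_empty]
              · have hsub' : φ ⁻¹' G ⊆
                    (AffineSubspace.mk' y₀ (LinearMap.ker li) :
                      Set (EuclideanSpace ℝ (Fin m))) := by
                  intro y hy
                  have h1 : li y = -(c i) := by
                    have := hy.2
                    have hφy : φ y i = c i + (ℓ y : EuclideanSpace ℝ (Fin n)) i := rfl
                    rw [Set.mem_preimage] at hy
                    have h2 : φ y i = 0 := hy.2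
                    rw [hφy] at h2
                    rw [hli_apply]
                    linarith
                  have h0 : li y₀ = -(c i) := by
                    have h2 : φ y₀ i = 0 := hy₀.2
                    have hφy : φ y₀ i = c i + (ℓ y₀ : EuclideanSpace ℝ (Fin n)) i := rfl
                    rw [hφy] at h2
                    rw [hli_apply]
                    linarith
                  have : y - y₀ ∈ LinearMap.ker li := by
                    rw [LinearMap.mem_ker, map_sub, h1, h0, sub_self]
                  have hy' := AffineSubspace.vadd_mem_mk' y₀ this
                  simpa using hy'
                have hne_top : AffineSubspace.mk' y₀ (LinearMap.ker li) ≠ ⊤ := by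
                  intro htop
                  have : (AffineSubspace.mk' y₀ (LinearMap.ker li)).direction = ⊤ := by
                    rw [htop, AffineSubspace.direction_top]
                  rw [AffineSubspace.direction_mk'] at this
                  exact hli_ne (LinearMap.ker_eq_top.1 this)
                refine le_antisymm ?_ zero_le
                calc μH[(n : ℝ) - 1] (φ ⁻¹' G)
                    ≤ μH[(n : ℝ) - 1]
                      (AffineSubspace.mk' y₀ (LinearMap.ker li) :
                        Set (EuclideanSpace ℝ (Fin m))) := measure_mono hsub'
                  _ = 0 := aux_affine hd _ hne_top
    -- conclude
    have hΔΔo : μH[(n : ℝ) - 1] Δ = μH[(n : ℝ) - 1] Δo := by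
      refine le_antisymm ?_ (measure_mono fun x hx => ⟨fun i => (hx.1 i).le, hx.2⟩)
      calc μH[(n : ℝ) - 1] Δ ≤ μH[(n : ℝ) - 1] (Δo ∪ (Δ \ Δo)) := by
            refine measure_mono fun x hx => ?_
            by_cases hx' : x ∈ Δo
            · exact Or.inl hx'
            · exact Or.inr ⟨hx, hx'⟩
        _ ≤ μH[(n : ℝ) - 1] Δo + μH[(n : ℝ) - 1] (Δ \ Δo) := measure_union_le _ _
        _ = μH[(n : ℝ) - 1] Δo := by rw [hbd, add_zero]
    rw [hEeq, scale Δo hΔo_sub, hΔΔo]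
end
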